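/- Fix T ≥ 3 and nonzero reals τ₀, τ₁, τ₂, and arbitrary reals τ₃,...,τ_{T−1}. Let e₀,...,e_{T−1} be the standard basis of ℝ^T, define v_j = τ_j e₀ + τ₀ e_j for j = 1,...,T−1, and v* = τ₁ e₀ + (τ₀ + τ₂) e₁ + τ₁ e₂. Then the T×T matrix V with rows v₁ᵀ,...,v_{T−1}ᵀ, v*ᵀ has determinant equal (up to sign) to 2·τ₀^{T−2}·τ₁·τ₂; in particular V is invertible when τ₀, τ₁, τ₂ are all nonzero. -/

import Mathlib

private def rowFun (n : ℕ) : Fin n ⊕ Fin 3 → Fin (n + 3) := fun x =>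
  match x with
  | .inl k => ⟨(k : ℕ) + 2, by omega⟩
  | .inr j => if (j : ℕ) = 0 then ⟨0, by omega⟩
              else if (j : ℕ) = 1 then ⟨1, by omega⟩ else ⟨n + 2, by omega⟩

private def colFun (n : ℕ) : Fin n ⊕ Fin 3 → Fin (n + 3) := fun x =>
  match x with
  | .inl k => ⟨(k : ℕ) + 3, by omega⟩
  | .inr j => ⟨(j : ℕ), by omega⟩

private lemma rowFun_inl (n : ℕ) (k : Fin n) : (rowFun n (.inl k) : ℕ) = (k : ℕ) + 2 := rfl

private lemma rowFun_inr (n : ℕ) (j : Fin 3) :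
    (rowFun n (.inr j) : ℕ) = if (j : ℕ) = 0 then 0 else if (j : ℕ) = 1 then 1 else n + 2 := by
  fin_cases j <;> simp [rowFun]

private lemma colFun_inl (n : ℕ) (k : Fin n) : (colFun n (.inl k) : ℕ) = (k : ℕ) + 3 := rfl
private lemma colFun_inr (n : ℕ) (j : Fin 3) : (colFun n (.inr j) : ℕ) = (j : ℕ) := rfl

private lemma rowFun_bij (n : ℕ) : Function.Bijective (rowFun n) := by
  rw [Fintype.bijective_iff_injective_and_card]
  refine ⟨?_, by simp⟩
  rintro (a | a) (b | b) h <;>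
    [skip; skip; skip; skip] <;>
    · have := congrArg (Fin.val) h
      first
        | (rw [rowFun_inl, rowFun_inl] at this
           exact congrArg Sum.inl (Fin.ext (by omega)))
        | (rw [rowFun_inl, rowFun_inr] at this
           have hb := b.isLt; have ha := a.isLt
           exfalso; split_ifs at this <;> omega)
        | (rw [rowFun_inr, rowFun_inl] at this
           have hb := b.isLt; have ha := a.isLt
           exfalso; split_ifs at this <;> omega)
        | (rw [rowFun_inr, rowFun_inr] at this
           have hb := b.isLt; have ha := a.isLt
           refine congrArg Sum.inr (Fin.ext ?_)
           split_ifs at this <;> omega)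

private lemma colFun_bij (n : ℕ) : Function.Bijective (colFun n) := by
  rw [Fintype.bijective_iff_injective_and_card]
  refine ⟨?_, by simp⟩
  rintro (a | a) (b | b) h <;>
    · have := congrArg (Fin.val) h
      simp only [colFun_inl, colFun_inr] at this
      have hb := b.isLt; have ha := a.isLt
      first
        | exact congrArg Sum.inl (Fin.ext (by omega))
        | exact congrArg Sum.inr (Fin.ext (by omega))
        | (exfalso; omega)

/-- Determinant nondegeneracy check: the `T×T` matrix with rows
`v_j = τ_j e₀ + τ₀ e_j` (`j = 1,…,T−1`) and `v* = τ₁ e₀ + (τ₀+τ₂) e₁ + τ₁ e₂` has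
determinant equal up to sign to `2 τ₀^{T−2} τ₁ τ₂`; in particular it is invertible when
`τ₀, τ₁, τ₂` are nonzero. -/
theorem stmt14 (T : ℕ) (hT : 3 ≤ T) (τ : ℕ → ℝ)
    (h0 : τ 0 ≠ 0) (h1 : τ 1 ≠ 0) (h2 : τ 2 ≠ 0)
    (V : Matrix (Fin T) (Fin T) ℝ)
    (hV : ∀ i j : Fin T, V i j =
      if (i : ℕ) < T - 1 then
        (if (j : ℕ) = 0 then τ ((i : ℕ) + 1)
         else if (j : ℕ) = (i : ℕ) + 1 then τ 0 else 0)
      else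
        (if (j : ℕ) = 0 then τ 1
         else if (j : ℕ) = 1 then τ 0 + τ 2
         else if (j : ℕ) = 2 then τ 1 else 0)) :
    |V.det| = |2 * τ 0 ^ (T - 2) * τ 1 * τ 2| ∧ IsUnit V := by
  obtain ⟨n, rfl⟩ : ∃ n, T = n + 3 := ⟨T - 3, by omega⟩
  set er : Fin n ⊕ Fin 3 ≃ Fin (n + 3) := Equiv.ofBijective _ (rowFun_bij n) with her
  set ec : Fin n ⊕ Fin 3 ≃ Fin (n + 3) := Equiv.ofBijective _ (colFun_bij n) with hec
  have herv : ∀ x, (er x : ℕ) = (rowFun n x : ℕ) := fun x => rfl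
  have hecv : ∀ x, (ec x : ℕ) = (colFun n x : ℕ) := fun x => rfl
  set B : Matrix (Fin n) (Fin 3) ℝ := fun k j => if (j : ℕ) = 0 then τ ((k : ℕ) + 3) else 0
    with hB
  set D : Matrix (Fin 3) (Fin 3) ℝ :=
    !![τ 1, τ 0, 0; τ 2, 0, τ 0; τ 1, τ 0 + τ 2, τ 1] with hD
  have hM : V.submatrix er ec
      = Matrix.fromBlocks (Matrix.diagonal fun _ => τ 0) B 0 D := by
    ext i j
    rcases i with k | i <;> rcases j with m | j <;>
      rw [Matrix.submatrix_apply, hV]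
    · rw [Matrix.fromBlocks_apply₁₁, Matrix.diagonal_apply]
      have hk := k.isLt
      rw [herv, hecv, rowFun_inl, colFun_inl, if_pos (by omega), if_neg (by omega)]
      by_cases h : k = m
      · subst h; rw [if_pos (by omega), if_pos rfl]
      · rw [if_neg ?_, if_neg h]
        have : (k : ℕ) ≠ (m : ℕ) := fun hc => h (Fin.ext hc)
        omega
    · rw [Matrix.fromBlocks_apply₁₂]
      have hk := k.isLt
      have hj := j.isLt
      rw [herv, hecv, rowFun_inl, colFun_inr, if_pos (by omega)]
      show _ = if (j : ℕ) = 0 then τ ((k : ℕ) + 3) else 0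
      split_ifs <;> first | rfl | omega
    · rw [Matrix.fromBlocks_apply₂₁, Matrix.zero_apply, herv, hecv, rowFun_inr, colFun_inl]
      have hm := m.isLt
      have hi := i.isLt
      split_ifs <;> first | rfl | omega | exact absurd (by assumption) not_false
    · rw [Matrix.fromBlocks_apply₂₂, herv, hecv, rowFun_inr, colFun_inr, hD]
      have hi := i.isLt
      have hj := j.isLt
      fin_cases i <;> fin_cases j <;> norm_num <;> split_ifs <;> first | rfl | omega
  have hdet : |V.det| = |2 * τ 0 ^ (n + 3 - 2) * τ 1 * τ 2| := by
    have h1' : |(V.submatrix er ec).det| = |V.det| :=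
      Matrix.abs_det_submatrix_equiv_equiv er ec V
    rw [← h1', hM, Matrix.det_fromBlocks_zero₂₁, Matrix.det_diagonal]
    have hDdet : D.det = -(2 * τ 0 * τ 1 * τ 2) := by
      rw [hD, Matrix.det_fin_three]; norm_num [Matrix.cons_val_zero, Matrix.cons_val_one, Matrix.cons_val_two, Matrix.vecHead, Matrix.vecTail]; ring
    rw [hDdet, Finset.prod_const]
    have hc : (n + 3 - 2) = n + 1 := by omega
    rw [hc, Finset.card_univ, Fintype.card_fin, abs_mul, abs_neg, ← abs_mul]
    congr 1
    ring
  refine ⟨hdet, ?_⟩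
  rw [Matrix.isUnit_iff_isUnit_det, isUnit_iff_ne_zero]
  intro hc
  rw [hc, abs_zero] at hdet
  have hne : 2 * τ 0 ^ (n + 3 - 2) * τ 1 * τ 2 ≠ 0 := by positivity
  exact hne (abs_eq_zero.mp hdet.symm)
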